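/- arXiv:2402.11256 — 5 statements merged into one kernel-verified Lean document; each statement's English description precedes it below -/
import Mathlib

section
/- Let F be a field, and let E = [[a,b],[a(1−a)b⁻¹, 1−a]] and E₁ = [[a₁,b₁],[a₁(1−a₁)b₁⁻¹, 1−a₁]] with a, a₁ ∉ {0,1} and b, b₁ ≠ 0. Then E·E₁ = 0 if and only if b₁ = −(1−a₁)a⁻¹b. -/
/-!
Both matrices have rank one: `E = u vᵀ` with `u = (1, (1 - a) b⁻¹)` and `v = (a, b)`, and likewise
`E₁ = u₁ v₁ᵀ`. Hence `E E₁ = (v ⬝ u₁) u v₁ᵀ`, and as `u` and `v₁` are nonzero this vanishes exactly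
when `v ⬝ u₁ = a + b (1 - a₁) b₁⁻¹` does; solving for `b₁` gives the claim.
-/

open Matrix

theorem vecMulVec_mul_vecMulVec_eq_zero_iff {l m n α : Type*} [Fintype m] [Semiring α]
    [NoZeroDivisors α] {u : l → α} {x : n → α} (hu : u ≠ 0) (hx : x ≠ 0) (v w : m → α) :
    vecMulVec u v * vecMulVec w x = 0 ↔ v ⬝ᵥ w = 0 := by
  rw [vecMulVec_mul_vecMulVec]
  obtain ⟨i, hi : u i ≠ 0⟩ := Function.ne_iff.mp hu
  obtain ⟨j, hj : x j ≠ 0⟩ := Function.ne_iff.mp hx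
  refine ⟨fun h => ?_, fun h => by ext; simp [h, vecMulVec_apply]⟩
  simpa [vecMulVec_apply, hi, hj] using congr_fun₂ h i j

theorem idempotent_eq_vecMulVec {F : Type*} [Field F] (a : F) {b : F} (hb : b ≠ 0) :
    (!![a, b; a * (1 - a) * b⁻¹, 1 - a] : Matrix (Fin 2) (Fin 2) F) =
      vecMulVec ![1, (1 - a) * b⁻¹] ![a, b] := by
  ext i j
  fin_cases i <;> fin_cases j <;> simp [vecMulVec_apply] <;> field_simp

theorem stmt_8_general (F : Type*) [Field F] (a b a₁ b₁ : F) (ha0 : a ≠ 0) (hb : b ≠ 0)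
    (hb₁ : b₁ ≠ 0) :
    (!![a, b; a * (1 - a) * b⁻¹, 1 - a] : Matrix (Fin 2) (Fin 2) F) *
        !![a₁, b₁; a₁ * (1 - a₁) * b₁⁻¹, 1 - a₁] = 0 ↔
      b₁ = -(1 - a₁) * a⁻¹ * b := by
  rw [idempotent_eq_vecMulVec a hb, idempotent_eq_vecMulVec a₁ hb₁,
    vecMulVec_mul_vecMulVec_eq_zero_iff (by simp) (by simp [hb₁])]
  simp only [cons_dotProduct_cons, dotProduct_of_isEmpty, mul_one, add_zero]
  constructor <;> intro h <;> field_simp at h ⊢ <;> linear_combination h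

theorem stmt_8 (F : Type*) [Field F] (a b a₁ b₁ : F) (ha0 : a ≠ 0) (ha1 : a ≠ 1) (hb : b ≠ 0)
    (ha₁0 : a₁ ≠ 0) (ha₁1 : a₁ ≠ 1) (hb₁ : b₁ ≠ 0) :
    (!![a, b; a * (1 - a) * b⁻¹, 1 - a] : Matrix (Fin 2) (Fin 2) F) *
        !![a₁, b₁; a₁ * (1 - a₁) * b₁⁻¹, 1 - a₁] = 0 ↔
      b₁ = -(1 - a₁) * a⁻¹ * b :=
  stmt_8_general F a b a₁ b₁ ha0 hb hb₁
end

section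
/- Let F be a finite field with n elements and R = M₂(F). Define the graph G on the nontrivial idempotents of R where distinct e, f are adjacent iff ef = 0 or fe = 0. Then every vertex of G has degree 2n − 1. -/
open Matrix

lemma fin2_mat_ext {F : Type*} [Field F] (A : Matrix (Fin 2) (Fin 2) F) :
    A = !![A 0 0, A 0 1; A 1 0, A 1 1] := Matrix.eta_fin_two A

lemma idem_entries {F : Type*} [Field F] (e : Matrix (Fin 2) (Fin 2) F) (h : e*e = e)
    (h0 : e ≠ 0) (h1 : e ≠ 1) :
    e 0 0 + e 1 1 = 1 ∧ e 0 0 * e 1 1 = e 0 1 * e 1 0 := by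
  have key : ∀ i j : Fin 2, e i 0 * e 0 j + e i 1 * e 1 j = e i j := by
    intro i j
    have := congrFun (congrFun h i) j
    simpa [Matrix.mul_apply, Fin.sum_univ_two] using this
  have k00 := key 0 0; have k01 := key 0 1; have k10 := key 1 0; have k11 := key 1 1
  have ht : e 0 0 + e 1 1 = 1 := by
    by_contra hne
    have htne : e 0 0 + e 1 1 - 1 ≠ 0 := fun hh => hne (by linear_combination hh)
    have hb : e 0 1 = 0 :=
      (mul_eq_zero.mp (show e 0 1 * (e 0 0 + e 1 1 - 1) = 0 by linear_combination k01)).resolve_right htne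
    have hc : e 1 0 = 0 :=
      (mul_eq_zero.mp (show e 1 0 * (e 0 0 + e 1 1 - 1) = 0 by linear_combination k10)).resolve_right htne
    have had : e 0 0 = e 1 1 := by
      have := (mul_eq_zero.mp (show (e 0 0 - e 1 1) * (e 0 0 + e 1 1 - 1) = 0 by
        linear_combination k00 - k11)).resolve_right htne
      linear_combination this
    have ha : e 0 0 = 0 ∨ e 0 0 = 1 := by
      have := mul_eq_zero.mp (show e 0 0 * (e 0 0 - 1) = 0 by linear_combination k00 - e 1 0 * hb)
      rcases this with h' | h'
      · exact Or.inl h'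
      · exact Or.inr (by linear_combination h')
    rcases ha with h' | h'
    · refine h0 ?_
      rw [fin2_mat_ext e, h', hb, hc, ← had, h']
      ext i j
      fin_cases i <;> fin_cases j <;> simp
    · refine h1 ?_
      rw [fin2_mat_ext e, h', hb, hc, ← had, h']
      ext i j
      fin_cases i <;> fin_cases j <;> simp [Matrix.one_apply]
  exact ⟨ht, by linear_combination e 0 0 * ht - k00⟩

lemma conj_ex {F : Type*} [Field F] (e : Matrix (Fin 2) (Fin 2) F) (h : e*e = e)
    (h0 : e ≠ 0) (h1 : e ≠ 1) :
    ∃ P Q : Matrix (Fin 2) (Fin 2) F, P * Q = 1 ∧ Q * P = 1 ∧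
      e * P = P * !![(1:F),0;0,0] := by
  obtain ⟨ht, hdet⟩ := idem_entries e h h0 h1
  set a := e 0 0 with ha'; set b := e 0 1 with hb'; set c := e 1 0 with hc'
  set d := e 1 1 with hd'
  have he : e = !![a, b; c, d] := fin2_mat_ext e
  by_cases hc : c = 0
  · have had : a * d = 0 := by rw [hdet, hc]; ring
    rcases mul_eq_zero.mp had with haz | hdz
    · -- a = 0, d = 1 : e = !![0,b;0,1]
      have hd1 : d = 1 := by linear_combination ht - haz
      refine ⟨!![b,1;1,0], !![0,1;1,-b], ?_, ?_, ?_⟩ <;>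
        · first
            | rw [he, haz, hc, hd1]
            | skip
          ext i j
          fin_cases i <;> fin_cases j <;>
            simp [Matrix.mul_apply, Fin.sum_univ_two, Matrix.one_apply] <;> ring
    · -- d = 0, a = 1 : e = !![1,b;0,0]
      have ha1 : a = 1 := by linear_combination ht - hdz
      refine ⟨!![1,-b;0,1], !![1,b;0,1], ?_, ?_, ?_⟩ <;>
        · first
            | rw [he, ha1, hc, hdz]
            | skip
          ext i j
          fin_cases i <;> fin_cases j <;>
            simp [Matrix.mul_apply, Fin.sum_univ_two, Matrix.one_apply] <;> ring
  · refine ⟨!![a, d; c, -c], !![1, d/c; 1, -a/c], ?_, ?_, ?_⟩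
    · ext i j
      fin_cases i <;> fin_cases j <;>
        simp [Matrix.mul_apply, Fin.sum_univ_two, Matrix.one_apply] <;>
        (try field_simp) <;>
        first
          | ring1
          | linear_combination ht
          | linear_combination c * ht
          | linear_combination (1 - c) * ht
          | linear_combination (c - 1) * ht
          | linear_combination (c*c) * ht
    · ext i j
      fin_cases i <;> fin_cases j <;>
        simp [Matrix.mul_apply, Fin.sum_univ_two, Matrix.one_apply] <;>
        (try field_simp) <;>
        first
          | ring1
          | linear_combination ht
          | linear_combination c * ht
          | linear_combination (1 - c) * ht
          | linear_combination (c - 1) * ht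
          | linear_combination (c*c) * ht
    · rw [he]
      ext i j
      fin_cases i <;> fin_cases j <;>
        simp [Matrix.mul_apply, Fin.sum_univ_two] <;>
        first
          | linear_combination a * ht - hdet
          | linear_combination hdet
          | linear_combination c * ht
          | ring1

lemma class_left {F : Type*} [Field F] (g : Matrix (Fin 2) (Fin 2) F) (hg : g*g = g)
    (h0 : g ≠ 0) (hE : (!![(1:F),0;0,0]) * g = 0) : ∃ r, g = !![0,0;r,1] := by
  have key : ∀ i j : Fin 2, g i 0 * g 0 j + g i 1 * g 1 j = g i j := by
    intro i j
    have := congrFun (congrFun hg i) j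
    simpa [Matrix.mul_apply, Fin.sum_univ_two] using this
  have h00 : g 0 0 = 0 := by
    have := congrFun (congrFun hE 0) 0
    simpa [Matrix.mul_apply, Fin.sum_univ_two] using this
  have h01 : g 0 1 = 0 := by
    have := congrFun (congrFun hE 0) 1
    simpa [Matrix.mul_apply, Fin.sum_univ_two] using this
  have k11 := key 1 1; have k10 := key 1 0
  simp only [h00, h01] at k11 k10
  -- k11 : g 1 0 * 0 + g 1 1 * g 1 1 = g 1 1 ; k10 : g 1 0 * 0 + g 1 1 * g 1 0 = g 1 0
  have h11 : g 1 1 = 0 ∨ g 1 1 = 1 := by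
    rcases mul_eq_zero.mp (show g 1 1 * (g 1 1 - 1) = 0 by linear_combination k11) with h' | h'
    · exact Or.inl h'
    · exact Or.inr (by linear_combination h')
  rcases h11 with h' | h'
  · exfalso
    apply h0
    have h10 : g 1 0 = 0 := by
      rw [h'] at k10; linear_combination -k10
    rw [fin2_mat_ext g, h00, h01, h10, h']
    ext i j
    fin_cases i <;> fin_cases j <;> simp
  · refine ⟨g 1 0, ?_⟩
    conv_lhs => rw [fin2_mat_ext g]
    rw [h00, h01, h']

lemma class_right {F : Type*} [Field F] (g : Matrix (Fin 2) (Fin 2) F) (hg : g*g = g)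
    (h0 : g ≠ 0) (hE : g * (!![(1:F),0;0,0]) = 0) : ∃ q, g = !![0,q;0,1] := by
  have key : ∀ i j : Fin 2, g i 0 * g 0 j + g i 1 * g 1 j = g i j := by
    intro i j
    have := congrFun (congrFun hg i) j
    simpa [Matrix.mul_apply, Fin.sum_univ_two] using this
  have h00 : g 0 0 = 0 := by
    have := congrFun (congrFun hE 0) 0
    simpa [Matrix.mul_apply, Fin.sum_univ_two] using this
  have h10 : g 1 0 = 0 := by
    have := congrFun (congrFun hE 1) 0
    simpa [Matrix.mul_apply, Fin.sum_univ_two] using this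
  have k11 := key 1 1; have k01 := key 0 1
  simp only [h00, h10] at k11 k01
  have h11 : g 1 1 = 0 ∨ g 1 1 = 1 := by
    rcases mul_eq_zero.mp (show g 1 1 * (g 1 1 - 1) = 0 by linear_combination k11) with h' | h'
    · exact Or.inl h'
    · exact Or.inr (by linear_combination h')
  rcases h11 with h' | h'
  · exfalso
    apply h0
    have h01 : g 0 1 = 0 := by
      rw [h'] at k01; linear_combination -k01
    rw [fin2_mat_ext g, h00, h01, h10, h']
    ext i j
    fin_cases i <;> fin_cases j <;> simp
  · refine ⟨g 0 1, ?_⟩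
    conv_lhs => rw [fin2_mat_ext g]
    rw [h00, h10, h']

theorem stmt_12 (F : Type*) [Field F] [Fintype F] (n : ℕ) (hn : Fintype.card F = n)
    (G : SimpleGraph {A : Matrix (Fin 2) (Fin 2) F // A * A = A ∧ A ≠ 0 ∧ A ≠ 1})
    (hG : ∀ e f, G.Adj e f ↔ e ≠ f ∧ ((e : Matrix (Fin 2) (Fin 2) F) * f = 0 ∨
      (f : Matrix (Fin 2) (Fin 2) F) * e = 0)) :
    ∀ v, Nat.card {w | G.Adj v w} = 2 * n - 1 := by
  classical
  intro v
  obtain ⟨P, Q, hPQ, hQP, hEP⟩ := conj_ex v.1 v.2.1 v.2.2.1 v.2.2.2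
  set E : Matrix (Fin 2) (Fin 2) F := !![1,0;0,0] with hEdef
  have cancelQP : ∀ Z : Matrix (Fin 2) (Fin 2) F, Q * (P * Z) = Z := fun Z => by
    rw [← mul_assoc, hQP, one_mul]
  have cancelPQ : ∀ Z : Matrix (Fin 2) (Fin 2) F, P * (Q * Z) = Z := fun Z => by
    rw [← mul_assoc, hPQ, one_mul]
  have conj_mul : ∀ X Y : Matrix (Fin 2) (Fin 2) F,
      (P * X * Q) * (P * Y * Q) = P * (X * Y) * Q := fun X Y => by
    simp only [mul_assoc, cancelQP]
  have conj_mul' : ∀ X Y : Matrix (Fin 2) (Fin 2) F,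
      (Q * X * P) * (Q * Y * P) = Q * (X * Y) * P := fun X Y => by
    simp only [mul_assoc, cancelPQ]
  have recover : ∀ X : Matrix (Fin 2) (Fin 2) F, Q * (P * X * Q) * P = X := fun X => by
    simp only [mul_assoc, cancelQP]
    rw [hQP, mul_one]
  have recover' : ∀ X : Matrix (Fin 2) (Fin 2) F, P * (Q * X * P) * Q = X := fun X => by
    simp only [mul_assoc, cancelPQ]
    rw [hPQ, mul_one]
  have heq : v.1 = P * E * Q := by
    calc v.1 = v.1 * (P * Q) := by rw [hPQ, mul_one]
    _ = (v.1 * P) * Q := by rw [mul_assoc]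
    _ = P * E * Q := by rw [hEP]
  have hEeq : E = Q * v.1 * P := by rw [heq, recover]
  -- the parametrizing matrices
  set M : F ⊕ {x : F // x ≠ 0} → Matrix (Fin 2) (Fin 2) F :=
    Sum.elim (fun c => !![0,0;c,1]) (fun b => !![0,b.1;0,1]) with hM
  have hMidem : ∀ i, M i * M i = M i := by
    rintro (c | b) <;>
      · ext i j
        fin_cases i <;> fin_cases j <;>
          simp [hM, Matrix.mul_apply, Fin.sum_univ_two]
  have hM11 : ∀ i, M i 1 1 = 1 := by rintro (c | b) <;> simp [hM]
  have hM00 : ∀ i, M i 0 0 = 0 := by rintro (c | b) <;> simp [hM]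
  have hMadj : ∀ i, E * M i = 0 ∨ M i * E = 0 := by
    rintro (c | b)
    · left
      ext i j
      fin_cases i <;> fin_cases j <;> simp [hM, hEdef, Matrix.mul_apply, Fin.sum_univ_two]
    · right
      ext i j
      fin_cases i <;> fin_cases j <;> simp [hM, hEdef, Matrix.mul_apply, Fin.sum_univ_two]
  -- the conjugated matrices are valid vertices adjacent to v
  have hW : ∀ i, (P * M i * Q) * (P * M i * Q) = P * M i * Q ∧
      P * M i * Q ≠ 0 ∧ P * M i * Q ≠ 1 := by
    intro i
    refine ⟨by rw [conj_mul, hMidem], ?_, ?_⟩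
    · intro hcon
      have : M i = 0 := by
        have := congrArg (fun X => Q * X * P) hcon
        simpa [recover] using this
      have := congrFun (congrFun this 1) 1
      rw [hM11 i] at this
      simpa using this
    · intro hcon
      have hMi : M i = Q * P := by
        have := congrArg (fun X => Q * X * P) hcon
        simp only [recover] at this
        rw [this, mul_one]
      rw [hQP] at hMi
      have := congrFun (congrFun hMi 0) 0
      rw [hM00 i] at this
      simp [Matrix.one_apply] at this
  have hWadj : ∀ i, G.Adj v ⟨P * M i * Q, hW i⟩ := by
    intro i
    rw [hG]
    constructor
    · intro hcon
      have hv1 : v.1 = P * M i * Q := congrArg Subtype.val hcon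
      have : E = M i := by
        rw [hEeq, hv1, recover]
      have := congrFun (congrFun this 1) 1
      rw [hM11 i] at this
      simp [hEdef] at this
    · rcases hMadj i with h' | h'
      · left
        show v.1 * (P * M i * Q) = 0
        rw [heq, conj_mul, h', Matrix.mul_zero, Matrix.zero_mul]
      · right
        show (P * M i * Q) * v.1 = 0
        rw [heq, conj_mul, h', Matrix.mul_zero, Matrix.zero_mul]
  -- the bijection
  let f : (F ⊕ {x : F // x ≠ 0}) → {w | G.Adj v w} := fun i => ⟨⟨P * M i * Q, hW i⟩, hWadj i⟩
  have hinj : Function.Injective f := by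
    intro i j hij
    have h1 : P * M i * Q = P * M j * Q := congrArg (fun x => x.1.1) hij
    have hMij : M i = M j := by
      have := congrArg (fun X => Q * X * P) h1
      simpa [recover] using this
    rcases i with c | b <;> rcases j with c' | b'
    · have := congrFun (congrFun hMij 1) 0
      simp only [hM, Sum.elim_inl] at this
      norm_num at this
      rw [this]
    · exfalso
      have := congrFun (congrFun hMij 0) 1
      simp only [hM, Sum.elim_inl, Sum.elim_inr] at this
      norm_num at this
      exact b'.2 this.symm
    · exfalso
      have := congrFun (congrFun hMij 0) 1
      simp only [hM, Sum.elim_inl, Sum.elim_inr] at this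
      norm_num at this
      exact b.2 this
    · have := congrFun (congrFun hMij 0) 1
      simp only [hM, Sum.elim_inr] at this
      norm_num at this
      rw [Subtype.ext this]
  have hsurj : Function.Surjective f := by
    rintro ⟨w, hw⟩
    have hadj : G.Adj v w := hw
    rw [hG] at hadj
    obtain ⟨hne, hor⟩ := hadj
    set g : Matrix (Fin 2) (Fin 2) F := Q * w.1 * P with hg
    have hgidem : g * g = g := by rw [hg, conj_mul', w.2.1]
    have hg0 : g ≠ 0 := by
      intro hcon
      have : w.1 = 0 := by
        have := congrArg (fun X => P * X * Q) hcon
        simpa [hg, recover'] using this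
      exact w.2.2.1 this
    have hwPgQ : w.1 = P * g * Q := by rw [hg, recover']
    rcases hor with h' | h'
    · have hEg : E * g = 0 := by
        rw [hEeq, hg, conj_mul', h', Matrix.mul_zero, Matrix.zero_mul]
      obtain ⟨r, hr⟩ := class_left g hgidem hg0 (by rw [← hEdef]; exact hEg)
      refine ⟨Sum.inl r, ?_⟩
      apply Subtype.ext
      apply Subtype.ext
      show P * M (Sum.inl r) * Q = w
      rw [hwPgQ, hr]
      rfl
    · have hgE : g * E = 0 := by
        rw [hEeq, hg, conj_mul', h', Matrix.mul_zero, Matrix.zero_mul]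
      obtain ⟨q, hq⟩ := class_right g hgidem hg0 (by rw [← hEdef]; exact hgE)
      by_cases hq0 : q = 0
      · refine ⟨Sum.inl 0, ?_⟩
        apply Subtype.ext
        apply Subtype.ext
        show P * M (Sum.inl 0) * Q = w
        rw [hwPgQ, hq, hq0]
        norm_num [hM]
      · refine ⟨Sum.inr ⟨q, hq0⟩, ?_⟩
        apply Subtype.ext
        apply Subtype.ext
        show P * M (Sum.inr ⟨q, hq0⟩) * Q = w
        rw [hwPgQ, hq]
        rfl
  have hcard := Nat.card_eq_of_bijective f ⟨hinj, hsurj⟩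
  rw [← hcard, Nat.card_sum, Nat.card_eq_fintype_card, Nat.card_eq_fintype_card, hn,
    Fintype.card_subtype_compl, Fintype.card_subtype_eq, hn]
  omega
end

section
/- Let F be a finite field with |F| > 2 and R = M₂(F). Define the graph G on the nontrivial idempotents of R where distinct e, f are adjacent iff ef = 0 or fe = 0. Then G contains a triangle (3-cycle), so its girth is 3. -/
theorem stmt_15 (F : Type*) [Field F] [Fintype F] (hF : 2 < Fintype.card F)
    (G : SimpleGraph {A : Matrix (Fin 2) (Fin 2) F // A * A = A ∧ A ≠ 0 ∧ A ≠ 1})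
    (hG : ∀ e f, G.Adj e f ↔ e ≠ f ∧ ((e : Matrix (Fin 2) (Fin 2) F) * f = 0 ∨
      (f : Matrix (Fin 2) (Fin 2) F) * e = 0)) :
    (∃ u v w, G.Adj u v ∧ G.Adj v w ∧ G.Adj w u) ∧ G.girth = 3 := by
  have hne : ∀ (M : Matrix (Fin 2) (Fin 2) F) i j, M i j ≠ 0 → M ≠ 0 := by
    intro M i j h h0
    exact h (by rw [h0]; rfl)
  have hne1 : ∀ (M : Matrix (Fin 2) (Fin 2) F) i j, M i j ≠ (1 : Matrix (Fin 2) (Fin 2) F) i j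
      → M ≠ 1 := by
    intro M i j h h0
    exact h (by rw [h0])
  have h10 : (1 : F) ≠ 0 := one_ne_zero
  set A : Matrix (Fin 2) (Fin 2) F := !![0, 0; 0, 1] with hA
  set B : Matrix (Fin 2) (Fin 2) F := !![1, 0; 1, 0] with hB
  set C : Matrix (Fin 2) (Fin 2) F := !![1, -1; 0, 0] with hC
  have hAidem : A * A = A := by
    ext i j; fin_cases i <;> fin_cases j <;> simp [hA, Matrix.mul_apply, Fin.sum_univ_two]
  have hBidem : B * B = B := by
    ext i j; fin_cases i <;> fin_cases j <;> simp [hB, Matrix.mul_apply, Fin.sum_univ_two]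
  have hCidem : C * C = C := by
    ext i j; fin_cases i <;> fin_cases j <;> simp [hC, Matrix.mul_apply, Fin.sum_univ_two]
  have hBA : B * A = 0 := by
    ext i j; fin_cases i <;> fin_cases j <;> simp [hA, hB, Matrix.mul_apply, Fin.sum_univ_two]
  have hCB : C * B = 0 := by
    ext i j; fin_cases i <;> fin_cases j <;> simp [hB, hC, Matrix.mul_apply, Fin.sum_univ_two]
  have hAC : A * C = 0 := by
    ext i j; fin_cases i <;> fin_cases j <;> simp [hA, hC, Matrix.mul_apply, Fin.sum_univ_two]
  classical
  set u : {M : Matrix (Fin 2) (Fin 2) F // M * M = M ∧ M ≠ 0 ∧ M ≠ 1} :=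
    ⟨A, hAidem, hne A 1 1 (by simp [hA]), hne1 A 0 0 (by simp [hA, Matrix.one_fin_two])⟩ with hu
  set v : {M : Matrix (Fin 2) (Fin 2) F // M * M = M ∧ M ≠ 0 ∧ M ≠ 1} :=
    ⟨B, hBidem, hne B 0 0 (by simp [hB]), hne1 B 1 1 (by simp [hB, Matrix.one_fin_two])⟩ with hv
  set w : {M : Matrix (Fin 2) (Fin 2) F // M * M = M ∧ M ≠ 0 ∧ M ≠ 1} :=
    ⟨C, hCidem, hne C 0 0 (by simp [hC]), hne1 C 0 1 (by simp [hC, Matrix.one_fin_two])⟩ with hw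
  have huv : u ≠ v := by
    intro h
    have : A 0 0 = B 0 0 := by rw [show A = B from congrArg Subtype.val h]
    simp [hA, hB] at this
  have hvw : v ≠ w := by
    intro h
    have : B 1 0 = C 1 0 := by rw [show B = C from congrArg Subtype.val h]
    simp [hB, hC] at this
  have hwu : w ≠ u := by
    intro h
    have : C 0 0 = A 0 0 := by rw [show C = A from congrArg Subtype.val h]
    simp [hA, hC] at this
  have hGuv : G.Adj u v := (hG u v).2 ⟨huv, Or.inr hBA⟩
  have hGvw : G.Adj v w := (hG v w).2 ⟨hvw, Or.inr hCB⟩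
  have hGwu : G.Adj w u := (hG w u).2 ⟨hwu, Or.inr hAC⟩
  refine ⟨⟨u, v, w, hGuv, hGvw, hGwu⟩, ?_⟩
  have hclique : ∃ s, G.IsNClique 3 s :=
    ⟨{u, v, w}, SimpleGraph.is3Clique_triple_iff.2 ⟨hGuv, hGwu.symm, hGvw⟩⟩
  obtain ⟨a, walk, hcyc, hlen⟩ :=
    SimpleGraph.is3Clique_iff_exists_cycle_length_three.1 hclique
  have hnotacyclic : ¬ G.IsAcyclic := fun h => h walk hcyc
  have hle : G.egirth ≤ 3 := by
    calc G.egirth ≤ (walk.length : ℕ∞) := by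
          refine iInf_le_of_le a (iInf_le_of_le walk (iInf_le_of_le hcyc le_rfl))
      _ = 3 := by rw [hlen]; rfl
  have hge : 3 ≤ G.egirth := SimpleGraph.three_le_egirth
  have : G.egirth = 3 := le_antisymm hle hge
  rw [SimpleGraph.girth, this]
  rfl
end

section
/- Let F be a finite field with n elements and R = M₂(F), and let G be the graph on the nontrivial idempotents of R with adjacency e ~ f iff e ≠ f and (ef = 0 or fe = 0). Then the Wiener index of G, defined as the sum of d(u,v) over all unordered pairs of distinct vertices, equals (1/2)(n² + n)(2n² − 1). -/
/-!
A nontrivial idempotent `e` of `M₂(F) ≅ End(F²)` is the projection onto the line `im e` along the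
line `ker e ≠ im e`, so the vertices are the ordered pairs `(a, b)` of distinct points of the
projective line, which has `n + 1` points. Since `e f = 0` iff `im f = ker e`, the vertex `(a, b)`
is adjacent exactly to the `(b, x)` and the `(x, a)`, i.e. it has degree `2n - 1`, and two
non-adjacent vertices `(a, b)`, `(c, d)` have the common neighbour `(b, c)`. Hence every distance
is `0`, `1` or `2`, and each row of the distance matrix sums to `2(N - 1) - (2n - 1)`, where
`N = n(n + 1)`.
-/

section

open Finset Module SimpleGraph

namespace SimpleGraph

variable {V W : Type*} {G : SimpleGraph V} {G' : SimpleGraph W}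

lemma Hom.edist_map_le (f : G →g G') (u v : V) : G'.edist (f u) (f v) ≤ G.edist u v := by
  by_cases h : G.Reachable u v
  · obtain ⟨p, hp⟩ := h.exists_walk_length_eq_edist
    rw [← hp, ← p.length_map f]
    exact (p.map f).edist_le
  · simp [edist_eq_top_of_not_reachable h]

lemma Iso.dist_eq (f : G ≃g G') (u v : V) : G'.dist (f u) (f v) = G.dist u v := by
  have h : G'.edist (f u) (f v) = G.edist u v :=
    le_antisymm (f.toHom.edist_map_le u v) (by simpa using f.symm.toHom.edist_map_le (f u) (f v))
  rw [dist, dist, h]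

def Iso.fromRel {r : V → V → Prop} {s : W → W → Prop} (φ : V ≃ W)
    (h : ∀ a b, s (φ a) (φ b) ↔ r a b) : fromRel r ≃g fromRel s where
  toEquiv := φ
  map_rel_iff' {a b} := by simp [fromRel_adj, h]

theorem sum_dist_add_degree [Fintype V] [DecidableEq V] [DecidableRel G.Adj]
    (h : ∀ u v, u ≠ v → ¬G.Adj u v → (G.commonNeighbors u v).Nonempty) (u : V) :
    ∑ v, G.dist u v + G.degree u + 2 = 2 * Fintype.card V := by
  have hdist (v : V) :
      G.dist u v + (if G.Adj u v then 1 else 0) + (if u = v then 2 else 0) = 2 := by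
    by_cases huv : u = v
    · subst huv; simp
    by_cases hadj : G.Adj u v
    · simp [huv, hadj, dist_eq_one_iff_adj.mpr hadj]
    · have : G.edist u v = 2 := edist_eq_two_iff.mpr ⟨huv, hadj, h u v huv hadj⟩
      simp [huv, hadj, dist, this]
  have hsum := sum_congr rfl fun v (_ : v ∈ univ) => hdist v
  rwa [sum_add_distrib, sum_add_distrib, sum_boole, sum_ite_eq, if_pos (mem_univ u),
    ← neighborFinset_eq_filter, card_neighborFinset_eq_degree, sum_const, card_univ,
    smul_eq_mul, Nat.cast_id, mul_comm] at hsum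

end SimpleGraph

lemma Fintype.card_subtype_ne_add_one {P : Type*} [Fintype P] [DecidableEq P] (b : P) :
    Fintype.card {x // x ≠ b} + 1 = Fintype.card P := by
  rw [Fintype.card_subtype_compl, Fintype.card_subtype_eq]
  exact Nat.sub_add_cancel (Fintype.card_pos_iff.mpr ⟨b⟩)

/-- The underlying graph of the line digraph of the complete digraph on `P`: the arrow `(a, b)` is
joined to the arrows leaving `b` and to the arrows entering `a`. -/
def arrowGraph (P : Type*) : SimpleGraph {p : P × P // p.1 ≠ p.2} :=
  fromRel fun e f => e.1.2 = f.1.1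

namespace arrowGraph

variable {P : Type*}

lemma adj_iff {e f : {p : P × P // p.1 ≠ p.2}} :
    (arrowGraph P).Adj e f ↔ e.1.2 = f.1.1 ∨ f.1.2 = e.1.1 := by
  rw [arrowGraph, fromRel_adj, and_iff_right_iff_imp]
  rintro (h | h) rfl <;> exact e.2 h.symm

lemma commonNeighbors_nonempty {e f : {p : P × P // p.1 ≠ p.2}} (h : ¬(arrowGraph P).Adj e f) :
    ((arrowGraph P).commonNeighbors e f).Nonempty := by
  rw [adj_iff, not_or] at h
  exact ⟨⟨(e.1.2, f.1.1), h.1⟩, by simp [mem_commonNeighbors, adj_iff]⟩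

variable [Fintype P] [DecidableEq P]

instance : DecidableRel (arrowGraph P).Adj := fun _ _ => decidable_of_iff _ adj_iff.symm

lemma card_arrows_add_card : Fintype.card {p : P × P // p.1 ≠ p.2} + Fintype.card P =
    Fintype.card P * Fintype.card P := by
  have : (univ.filter fun p : P × P => p.1 ≠ p.2) = (univ : Finset P).offDiag := by ext; simp
  rw [Fintype.card_subtype, this, offDiag_card, card_univ]
  exact Nat.sub_add_cancel (Nat.le_mul_self _)

lemma card_arrows_from (b : P) :
    #{f : {p : P × P // p.1 ≠ p.2} | b = f.1.1} + 1 = Fintype.card P := by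
  rw [← Fintype.card_subtype, ← Fintype.card_subtype_ne_add_one b]
  congr 1
  exact Fintype.card_congr
    { toFun f := ⟨f.1.1.2, fun h => f.1.2 (f.2.symm.trans h.symm)⟩
      invFun x := ⟨⟨(b, x.1), x.2.symm⟩, rfl⟩
      left_inv f := Subtype.ext (Subtype.ext (Prod.ext f.2 rfl))
      right_inv _ := rfl }

lemma card_arrows_to (a : P) :
    #{f : {p : P × P // p.1 ≠ p.2} | f.1.2 = a} + 1 = Fintype.card P := by
  rw [← Fintype.card_subtype, ← Fintype.card_subtype_ne_add_one a]
  congr 1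
  exact Fintype.card_congr
    { toFun f := ⟨f.1.1.1, fun h => f.1.2 (h.trans f.2.symm)⟩
      invFun x := ⟨⟨(x.1, a), x.2⟩, rfl⟩
      left_inv f := Subtype.ext (Subtype.ext (Prod.ext rfl f.2.symm))
      right_inv _ := rfl }

lemma degree_add_three (e : {p : P × P // p.1 ≠ p.2}) :
    (arrowGraph P).degree e + 3 = 2 * Fintype.card P := by
  have hrev : #{f : {p : P × P // p.1 ≠ p.2} | e.1.2 = f.1.1 ∧ f.1.2 = e.1.1} = 1 :=
    card_eq_one.mpr ⟨⟨(e.1.2, e.1.1), e.2.symm⟩, by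
      ext f; simp [Subtype.ext_iff, Prod.ext_iff, eq_comm]⟩
  have h := card_union_add_card_inter (s := {f : {p : P × P // p.1 ≠ p.2} | e.1.2 = f.1.1})
    (t := {f | f.1.2 = e.1.1})
  rw [← filter_or, ← filter_and, hrev] at h
  rw [← card_neighborFinset_eq_degree, neighborFinset_eq_filter]
  simp_rw [adj_iff]
  have := card_arrows_from e.1.2
  have := card_arrows_to e.1.1
  omega

theorem sum_sum_dist :
    ∑ e, ∑ f, ((arrowGraph P).dist e f : ℚ) =
      ((Fintype.card P : ℚ) ^ 2 - Fintype.card P) *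
        (2 * ((Fintype.card P : ℚ) ^ 2 - Fintype.card P) + 1 - 2 * Fintype.card P) := by
  have hN : (Fintype.card {p : P × P // p.1 ≠ p.2} : ℚ) =
      (Fintype.card P : ℚ) ^ 2 - Fintype.card P := by
    rw [eq_sub_iff_add_eq, sq]; exact_mod_cast card_arrows_add_card
  have hrow (e : {p : P × P // p.1 ≠ p.2}) : ∑ f, ((arrowGraph P).dist e f : ℚ) =
      2 * Fintype.card {p : P × P // p.1 ≠ p.2} + 1 - 2 * Fintype.card P := by
    have h1 := sum_dist_add_degree (fun _ _ _ => commonNeighbors_nonempty) e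
    have h2 := degree_add_three e
    rw [eq_sub_iff_add_eq]
    exact_mod_cast (by omega : ∑ f, (arrowGraph P).dist e f + 2 * Fintype.card P = _)
  simp_rw [hrow, sum_const, card_univ, nsmul_eq_mul, hN]

end arrowGraph

/-- Idempotence is spelled `e * e = e` rather than `IsIdempotentElem e` so that the vertex type is
syntactically the one of the theorem. -/
def idempotentGraph (R : Type*) [Semiring R] :
    SimpleGraph {e : R // e * e = e ∧ e ≠ 0 ∧ e ≠ 1} :=
  fromRel fun e f => e.1 * f.1 = 0

def RingEquiv.idempotentGraphIso {R S : Type*} [Semiring R] [Semiring S] (φ : R ≃+* S) :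
    idempotentGraph R ≃g idempotentGraph S :=
  Iso.fromRel (φ.toEquiv.subtypeEquiv fun e => by simp [← map_mul, φ.injective.eq_iff])
    fun e f => by simp [← map_mul]

variable {K V : Type*} [Field K] [AddCommGroup V] [Module K V]

variable (K V) in
abbrev Line := {H : Submodule K V // finrank K H = 1}

lemma Line.ne_bot (L : Line K V) : L.1 ≠ ⊥ := by
  obtain ⟨H, hH⟩ := L
  rintro rfl
  simp at hH

section FinrankTwo

open LinearMap

variable [FiniteDimensional K V] (hV : finrank K V = 2)
include hV

lemma Line.isCompl_of_ne {L M : Line K V} (h : L ≠ M) : IsCompl L.1 M.1 := by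
  refine (Submodule.isCompl_iff_disjoint _ _ (by rw [hV, L.2, M.2])).mpr (disjoint_iff.mpr ?_)
  by_contra hLM
  have hpos : 1 ≤ finrank K (L.1 ⊓ M.1 : Submodule K V) :=
    Nat.one_le_iff_ne_zero.mpr (Submodule.finrank_eq_zero.not.mpr hLM)
  have hL : L.1 ⊓ M.1 = L.1 :=
    Submodule.eq_of_le_of_finrank_le inf_le_left (by rw [L.2]; exact hpos)
  have hM : L.1 ⊓ M.1 = M.1 :=
    Submodule.eq_of_le_of_finrank_le inf_le_right (by rw [M.2]; exact hpos)
  exact h (Subtype.ext (hL.symm.trans hM))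

lemma LinearMap.IsIdempotentElem.finrank_range_eq_one_and_finrank_ker_eq_one
    {e : Module.End K V} (he : IsIdempotentElem e) (h0 : e ≠ 0) (h1 : e ≠ 1) :
    finrank K (range e) = 1 ∧ finrank K (ker e) = 1 := by
  have hsum := Submodule.finrank_add_eq_of_isCompl he.isCompl
  have hr : finrank K (range e) ≠ 0 := by
    rwa [Ne, Submodule.finrank_eq_zero, range_eq_bot]
  have hk : finrank K (ker e) ≠ 0 := by
    rw [Ne, Submodule.finrank_eq_zero]
    intro hk
    have htop : range e = ⊤ := eq_top_of_isCompl_bot (hk ▸ he.isCompl)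
    refine h1 ((he.ext_iff IsIdempotentElem.one).mpr ⟨?_, ?_⟩)
    · rw [htop, Module.End.one_eq_id, range_id]
    · rw [hk, Module.End.one_eq_id, ker_id]
  omega

lemma Line.isCompl_iff_ne {L M : Line K V} : IsCompl L.1 M.1 ↔ L ≠ M := by
  refine ⟨fun h hLM => L.ne_bot ?_, Line.isCompl_of_ne hV⟩
  rw [← inf_idem L.1]
  nth_rw 2 [hLM]
  exact h.inf_eq_bot

noncomputable def idempotentEquivArrows :
    {e : Module.End K V // e * e = e ∧ e ≠ 0 ∧ e ≠ 1} ≃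
      {p : Line K V × Line K V // p.1 ≠ p.2} where
  toFun e :=
    have h := IsIdempotentElem.finrank_range_eq_one_and_finrank_ker_eq_one hV e.2.1 e.2.2.1 e.2.2.2
    ⟨(⟨range e.1, h.1⟩, ⟨ker e.1, h.2⟩),
      (Line.isCompl_iff_ne hV).mp (IsIdempotentElem.isCompl e.2.1)⟩
  invFun p :=
    have hc := (Line.isCompl_iff_ne hV).mpr p.2
    ⟨p.1.1.1.projection p.1.2.1 hc, Submodule.isIdempotentElem_projection hc,
      fun h => p.1.1.ne_bot (by rw [← Submodule.range_projection hc, h, LinearMap.range_zero]),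
      fun h => p.1.2.ne_bot
        (by rw [← Submodule.ker_projection hc, h, Module.End.one_eq_id, ker_id])⟩
  left_inv e := Subtype.ext (IsIdempotentElem.eq_projection e.2.1).symm
  right_inv p := by ext <;> simp

noncomputable def idempotentGraphIsoArrowGraph :
    idempotentGraph (Module.End K V) ≃g arrowGraph (Line K V) :=
  Iso.fromRel (idempotentEquivArrows hV) fun e f => by
    have he := IsIdempotentElem.finrank_range_eq_one_and_finrank_ker_eq_one hV e.2.1 e.2.2.1 e.2.2.2
    have hf := IsIdempotentElem.finrank_range_eq_one_and_finrank_ker_eq_one hV f.2.1 f.2.2.1 f.2.2.2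
    change (⟨ker e.1, _⟩ : Line K V) = ⟨range f.1, _⟩ ↔ e.1 * f.1 = 0
    rw [Subtype.ext_iff, Module.End.mul_eq_comp, ← range_le_ker_iff, eq_comm]
    exact ⟨le_of_eq, fun h => Submodule.eq_of_le_of_finrank_eq h (hf.1.trans he.2.symm)⟩

end FinrankTwo

end

theorem stmt_18 (F : Type*) [Field F] [Fintype F] [DecidableEq F] (n : ℕ) (hn : Fintype.card F = n)
    (G : SimpleGraph {A : Matrix (Fin 2) (Fin 2) F // A * A = A ∧ A ≠ 0 ∧ A ≠ 1})
    (hG : ∀ e f, G.Adj e f ↔ e ≠ f ∧ ((e : Matrix (Fin 2) (Fin 2) F) * f = 0 ∨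
      (f : Matrix (Fin 2) (Fin 2) F) * e = 0)) :
    (1 / 2 : ℚ) * ∑ u : {A : Matrix (Fin 2) (Fin 2) F // A * A = A ∧ A ≠ 0 ∧ A ≠ 1},
        ∑ v : {A : Matrix (Fin 2) (Fin 2) F // A * A = A ∧ A ≠ 0 ∧ A ≠ 1},
          (G.dist u v : ℚ) =
      (1 / 2 : ℚ) * ((n : ℚ) ^ 2 + n) * (2 * (n : ℚ) ^ 2 - 1) := by
  classical
  have hG' : G = idempotentGraph (Matrix (Fin 2) (Fin 2) F) := by
    ext e f; rw [hG, idempotentGraph, SimpleGraph.fromRel_adj]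
  subst hG'
  let _ : Fintype (Line F (Fin 2 → F)) := Fintype.ofFinite _
  let φ := Matrix.toLinAlgEquiv'.toRingEquiv.idempotentGraphIso.trans
    (idempotentGraphIsoArrowGraph (K := F) (V := Fin 2 → F) (by simp))
  have hlines : Fintype.card (Line F (Fin 2 → F)) = n + 1 := by
    rw [Fintype.card_eq_nat_card,
      ← Nat.card_congr (Projectivization.equivSubmodule F (Fin 2 → F)),
      Projectivization.card_of_finrank_two _ _ (by simp), Nat.card_eq_fintype_card, hn]
  have hsum : ∑ u, ∑ v, ((idempotentGraph (Matrix (Fin 2) (Fin 2) F)).dist u v : ℚ) =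
      ∑ a, ∑ b, ((arrowGraph (Line F (Fin 2 → F))).dist a b : ℚ) :=
    Fintype.sum_equiv φ.toEquiv _ _ fun u => Fintype.sum_equiv φ.toEquiv _ _ fun v => by
      simp [SimpleGraph.Iso.dist_eq φ]
  rw [hsum, arrowGraph.sum_sum_dist, hlines]
  push_cast
  ring
end

section
/- Let F be a finite field with n elements and R = M₂(F), and let G be the graph on the nontrivial idempotents of R with adjacency e ~ f iff e ≠ f and (ef = 0 or fe = 0). Then the Harary index of G, defined as the sum of 1/d(u,v) over all unordered pairs of distinct vertices, equals (1/4)(n² + n)(n² + 3n − 2). -/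
/-!
A nontrivial idempotent of `M₂(F)` is a rank-one projection, determined by its image `x` and its
kernel `y`, two distinct points of the projective line `ℙ¹(F) ≅ Option F`; and `e * f = 0` exactly
when the image of `f` is the kernel of `e`. So `G` is the graph on the arcs `(x, y)` of the
complete digraph on the `n + 1` points of `ℙ¹(F)`, two arcs being adjacent when one ends where the
other starts. This graph has `N = n(n + 1)` vertices, is `k = (2n - 1)`-regular, and two
non-adjacent arcs `(x, y)`, `(x', y')` have the common neighbour `(y, x')`. Hence every distance
is `1` or `2`, each vertex contributes `k + (N - 1 - k) / 2` to the double sum, and the Harary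
index is `N (N - 1 + k) / 4 = (n² + n)(n² + 3n - 2) / 4`.
-/

open Finset Matrix

namespace SimpleGraph

section Harary

variable {V : Type*} [DecidableEq V] {G : SimpleGraph V} [DecidableRel G.Adj]

lemma inv_dist_eq_of_commonNeighbors_nonempty
    (hdiam : ∀ u v, u ≠ v → ¬G.Adj u v → (G.commonNeighbors u v).Nonempty) (u v : V) :
    (if u = v then 0 else (G.dist u v : ℚ)⁻¹) =
      (1 - (if u = v then 1 else 0) + (if G.Adj u v then 1 else 0)) / 2 := by
  by_cases huv : u = v
  · simp [huv]
  by_cases hadj : G.Adj u v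
  · simp [huv, hadj, dist_eq_one_iff_adj.mpr hadj]
  · have h2 : G.dist u v = 2 := by
      rw [dist, edist_eq_two_iff.mpr ⟨huv, hadj, hdiam u v huv hadj⟩]
      rfl
    simp [huv, hadj, h2]

variable [Fintype V]

lemma sum_inv_dist_eq_of_commonNeighbors_nonempty
    (hdiam : ∀ u v, u ≠ v → ¬G.Adj u v → (G.commonNeighbors u v).Nonempty) (u : V) :
    ∑ v, (if u = v then 0 else (G.dist u v : ℚ)⁻¹) = (Fintype.card V - 1 + G.degree u) / 2 := by
  simp only [inv_dist_eq_of_commonNeighbors_nonempty hdiam u, ← sum_div, sum_add_distrib,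
    sum_sub_distrib, sum_ite_eq, sum_boole, ← card_neighborFinset_eq_degree,
    neighborFinset_eq_filter]
  simp

theorem harary_eq_of_isRegularOfDegree {k : ℕ} (hreg : G.IsRegularOfDegree k)
    (hdiam : ∀ u v, u ≠ v → ¬G.Adj u v → (G.commonNeighbors u v).Nonempty) :
    (1 / 2 : ℚ) * ∑ u, ∑ v, (if u = v then 0 else (G.dist u v : ℚ)⁻¹) =
      Fintype.card V * (Fintype.card V - 1 + k) / 4 := by
  simp only [sum_inv_dist_eq_of_commonNeighbors_nonempty hdiam, hreg.degree_eq, sum_const,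
    card_univ, nsmul_eq_mul]
  ring

end Harary

namespace Iso

variable {V W : Type*} {G : SimpleGraph V} {G' : SimpleGraph W}

lemma isRegularOfDegree [G.LocallyFinite] [G'.LocallyFinite] (φ : G ≃g G') {k : ℕ}
    (h : G.IsRegularOfDegree k) : G'.IsRegularOfDegree k := fun w => by
  rw [← φ.apply_symm_apply w, φ.degree_eq, h.degree_eq]

lemma forall_commonNeighbors_nonempty (φ : G ≃g G')
    (h : ∀ u v, u ≠ v → ¬G.Adj u v → (G.commonNeighbors u v).Nonempty) :
    ∀ u v, u ≠ v → ¬G'.Adj u v → (G'.commonNeighbors u v).Nonempty := by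
  intro u v huv hnadj
  obtain ⟨u, rfl⟩ := φ.surjective u
  obtain ⟨v, rfl⟩ := φ.surjective v
  obtain ⟨w, huw, hvw⟩ := h u v (φ.injective.ne_iff.mp huv) (φ.map_adj_iff.not.mp hnadj)
  exact ⟨φ w, φ.map_adj_iff.mpr huw, φ.map_adj_iff.mpr hvw⟩

end Iso

variable (α : Type*)

abbrev Arc : Type _ := {p : α × α // p.1 ≠ p.2}

/-- The underlying graph of the line digraph of the complete digraph on `α`: two arcs are adjacent
when the head of one is the tail of the other. -/
def arcGraph : SimpleGraph (Arc α) :=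
  fromRel fun p q => q.1.1 = p.1.2

variable {α}

lemma arcGraph_adj {p q : Arc α} :
    (arcGraph α).Adj p q ↔ p ≠ q ∧ (q.1.1 = p.1.2 ∨ p.1.1 = q.1.2) :=
  fromRel_adj ..

instance [DecidableEq α] : DecidableRel (arcGraph α).Adj :=
  fun _ _ => decidable_of_iff' _ arcGraph_adj

lemma arcGraph_commonNeighbors_nonempty (p q : Arc α) (hpq : p ≠ q)
    (hnadj : ¬(arcGraph α).Adj p q) : ((arcGraph α).commonNeighbors p q).Nonempty := by
  have hne : p.1.2 ≠ q.1.1 := fun h => hnadj (arcGraph_adj.mpr ⟨hpq, Or.inl h.symm⟩)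
  refine ⟨⟨(p.1.2, q.1.1), hne⟩, arcGraph_adj.mpr ⟨?_, Or.inl rfl⟩,
    arcGraph_adj.mpr ⟨?_, Or.inr rfl⟩⟩
  · exact fun h => p.2 (congr_arg (·.1.1) h)
  · exact fun h => q.2 (congr_arg (·.1.2) h).symm

variable [Fintype α] [DecidableEq α]

lemma card_arcs :
    Fintype.card (Arc α) = Fintype.card α * (Fintype.card α - 1) := by
  rw [Fintype.card_subtype, Nat.mul_sub_one, ← card_univ, ← offDiag_card]
  congr 1
  ext
  simp

lemma card_arcs_fst_eq (b : α) :
    #{q : Arc α | q.1.1 = b} = Fintype.card α - 1 := by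
  rw [← card_univ, ← card_erase_of_mem (mem_univ b)]
  refine card_bij (fun q _ => q.1.2) (fun q hq => ?_) (fun q hq q' hq' h => ?_) (fun c hc => ?_)
  · simp only [mem_filter] at hq
    exact mem_erase.mpr ⟨fun h => q.2 (hq.2.trans h.symm), mem_univ _⟩
  · simp only [mem_filter] at hq hq'
    exact Subtype.ext (Prod.ext (hq.2.trans hq'.2.symm) h)
  · exact ⟨⟨(b, c), (ne_of_mem_erase hc).symm⟩, by simp, rfl⟩

lemma card_arcs_snd_eq (a : α) :
    #{q : Arc α | q.1.2 = a} = Fintype.card α - 1 := by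
  rw [← card_univ, ← card_erase_of_mem (mem_univ a)]
  refine card_bij (fun q _ => q.1.1) (fun q hq => ?_) (fun q hq q' hq' h => ?_) (fun c hc => ?_)
  · simp only [mem_filter] at hq
    exact mem_erase.mpr ⟨fun h => q.2 (h.trans hq.2.symm), mem_univ _⟩
  · simp only [mem_filter] at hq hq'
    exact Subtype.ext (Prod.ext h (hq.2.trans hq'.2.symm))
  · exact ⟨⟨(c, a), ne_of_mem_erase hc⟩, by simp, rfl⟩

lemma arcGraph_isRegularOfDegree :
    (arcGraph α).IsRegularOfDegree (2 * (Fintype.card α - 1) - 1) := by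
  intro p
  set S : Finset (Arc α) := {q | q.1.1 = p.1.2}
  set T : Finset (Arc α) := {q | q.1.2 = p.1.1}
  have hnbr : (arcGraph α).neighborFinset p = S ∪ T := by
    ext q
    simp only [S, T, mem_neighborFinset, arcGraph_adj, mem_union, mem_filter_univ]
    refine ⟨fun h => h.2.imp id Eq.symm, fun h => ⟨?_, h.imp id Eq.symm⟩⟩
    rintro rfl
    exact p.2 (h.elim id Eq.symm)
  have hinter : S ∩ T = {⟨(p.1.2, p.1.1), p.2.symm⟩} := by
    ext q
    simp [S, T, Subtype.ext_iff, Prod.ext_iff]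
  have := card_union_add_card_inter S T
  rw [← hnbr, hinter, card_singleton, card_arcs_fst_eq, card_arcs_snd_eq,
    card_neighborFinset_eq_degree] at this
  omega

end SimpleGraph

namespace ProjectiveLine

variable {F : Type*} [Field F]

/-- Homogeneous coordinates on `ℙ¹(F) = Option F`, with `none` the point at infinity;
`annVec y` is a linear form whose kernel is the line `y`. -/
def lineVec : Option F → Fin 2 → F
  | none => ![0, 1]
  | some s => ![1, s]

def annVec : Option F → Fin 2 → F
  | none => ![1, 0]
  | some s => ![-s, 1]

lemma lineVec_ne_zero (x : Option F) : lineVec x ≠ 0 := by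
  cases x <;> simp [lineVec, funext_iff, Fin.forall_fin_two]

lemma annVec_ne_zero (y : Option F) : annVec y ≠ 0 := by
  cases y <;> simp [annVec, funext_iff, Fin.forall_fin_two]

lemma annVec_dotProduct_lineVec_eq_zero {x y : Option F} :
    annVec y ⬝ᵥ lineVec x = 0 ↔ x = y := by
  cases x <;> cases y <;> simp [annVec, lineVec, neg_add_eq_zero, eq_comm]

lemma exists_eq_smul_lineVec {v : Fin 2 → F} (hv : v ≠ 0) :
    ∃ x, ∃ c : F, c ≠ 0 ∧ v = c • lineVec x := by
  by_cases h0 : v 0 = 0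
  · have h1 : v 1 ≠ 0 := fun h1 => hv (by ext i; fin_cases i <;> assumption)
    exact ⟨none, v 1, h1, by ext i; fin_cases i <;> simp [lineVec, h0]⟩
  · exact ⟨some (v 1 / v 0), v 0, h0, by ext i; fin_cases i <;> simp [lineVec]; field_simp⟩

lemma exists_eq_smul_annVec {φ : Fin 2 → F} {y : Option F} (h : φ ⬝ᵥ lineVec y = 0) :
    ∃ c : F, φ = c • annVec y := by
  cases y with
  | none =>
    simp only [lineVec, dotProduct, Fin.sum_univ_two] at h
    exact ⟨φ 0, by ext i; fin_cases i <;> simp_all [annVec]⟩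
  | some t =>
    simp only [lineVec, dotProduct, Fin.sum_univ_two] at h
    refine ⟨φ 1, ?_⟩
    ext i; fin_cases i <;> simp_all [annVec]; linear_combination h

/-- The projection of `F²` onto the line `x` along the line `y`; an idempotent when `x ≠ y`. -/
def proj (x y : Option F) : Matrix (Fin 2) (Fin 2) F :=
  (annVec y ⬝ᵥ lineVec x)⁻¹ • vecMulVec (lineVec x) (annVec y)

lemma proj_mul_proj (x y x' y' : Option F) :
    proj x y * proj x' y' = ((annVec y ⬝ᵥ lineVec x)⁻¹ * (annVec y' ⬝ᵥ lineVec x')⁻¹ *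
      (annVec y ⬝ᵥ lineVec x')) • vecMulVec (lineVec x) (annVec y') := by
  simp only [proj, Matrix.smul_mul, Matrix.mul_smul, vecMulVec_mul_vecMulVec, vecMulVec_smul,
    smul_smul]
  ring_nf

lemma proj_mul_proj_eq_zero_iff {x y x' y' : Option F} (h : x ≠ y) (h' : x' ≠ y') :
    proj x y * proj x' y' = 0 ↔ x' = y := by
  simp only [proj_mul_proj, smul_eq_zero, mul_eq_zero, inv_eq_zero, vecMulVec_eq_zero,
    annVec_dotProduct_lineVec_eq_zero, h, h', lineVec_ne_zero, annVec_ne_zero, or_false, false_or]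

lemma proj_mul_self {x y : Option F} (h : x ≠ y) : proj x y * proj x y = proj x y := by
  rw [proj_mul_proj, proj, inv_mul_cancel_right₀ (annVec_dotProduct_lineVec_eq_zero.not.mpr h)]

lemma proj_ne_zero {x y : Option F} (h : x ≠ y) : proj x y ≠ 0 :=
  fun h0 => h ((proj_mul_proj_eq_zero_iff h h).mp (by rw [h0, zero_mul]))

lemma proj_ne_one {x y : Option F} (h : x ≠ y) : proj x y ≠ 1 := by
  intro h1
  have := (proj_mul_proj_eq_zero_iff h h.symm).mpr rfl
  rw [h1, one_mul] at this
  exact proj_ne_zero h.symm this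

/-- `x` and `y` are recovered from `proj x y` through the zero-product criterion. -/
lemma eq_of_proj_eq {x y x' y' : Option F} (h : x ≠ y) (h' : x' ≠ y')
    (heq : proj x y = proj x' y') : x = x' ∧ y = y' := by
  obtain ⟨z, hz⟩ := exists_ne y
  obtain ⟨w, hw⟩ := exists_ne x
  refine ⟨?_, ?_⟩
  · have := (proj_mul_proj_eq_zero_iff hw h).mpr rfl
    rw [heq, proj_mul_proj_eq_zero_iff hw h'] at this
    exact this.symm
  · have := (proj_mul_proj_eq_zero_iff h hz.symm).mpr rfl
    rwa [heq, proj_mul_proj_eq_zero_iff h' hz.symm] at this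

lemma exists_mulVec_lineVec_eq_zero {B C : Matrix (Fin 2) (Fin 2) F} (hBC : B * C = 0)
    (hC : C ≠ 0) : ∃ x, B *ᵥ lineVec x = 0 := by
  obtain ⟨j, hj⟩ : ∃ j, C *ᵥ Pi.single j 1 ≠ 0 := by
    by_contra! h
    exact hC (ext_of_mulVec_single fun j => by rw [h, zero_mulVec])
  obtain ⟨x, c, hc, hx⟩ := exists_eq_smul_lineVec hj
  refine ⟨x, (smul_right_injective _ hc).eq_iff.mp ?_⟩
  rw [← mulVec_smul, ← hx, mulVec_mulVec, hBC, zero_mulVec, smul_zero]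

lemma exists_eq_vecMulVec_annVec {A : Matrix (Fin 2) (Fin 2) F} {y : Option F}
    (h : A *ᵥ lineVec y = 0) : ∃ c, A = vecMulVec c (annVec y) := by
  choose c hc using fun i => exists_eq_smul_annVec (congr_fun h i)
  exact ⟨c, by ext i j; rw [vecMulVec_apply, ← smul_eq_mul, ← Pi.smul_apply, ← hc]⟩

lemma exists_proj_eq {A : Matrix (Fin 2) (Fin 2) F} (hA : A * A = A) (h0 : A ≠ 0) (h1 : A ≠ 1) :
    ∃ x y, x ≠ y ∧ proj x y = A := by
  -- `x` is a point of the image of `A` and `y` a point of its kernel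
  obtain ⟨x, hx⟩ := exists_mulVec_lineVec_eq_zero (B := A - 1)
    (by rw [sub_mul, hA, one_mul, sub_self]) h0
  obtain ⟨y, hy⟩ := exists_mulVec_lineVec_eq_zero (C := 1 - A)
    (by rw [mul_sub, hA, mul_one, sub_self]) (sub_ne_zero.mpr h1.symm)
  rw [sub_mulVec, one_mulVec, sub_eq_zero] at hx
  obtain ⟨c, rfl⟩ := exists_eq_vecMulVec_annVec hy
  rw [vecMulVec_mulVec, op_smul_eq_smul] at hx
  have hxy : x ≠ y := by
    rintro rfl
    rw [annVec_dotProduct_lineVec_eq_zero.mpr rfl, zero_smul] at hx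
    exact lineVec_ne_zero x hx.symm
  have hd : annVec y ⬝ᵥ lineVec x ≠ 0 := annVec_dotProduct_lineVec_eq_zero.not.mpr hxy
  refine ⟨x, y, hxy, ?_⟩
  rw [proj, ← smul_vecMulVec, inv_smul_eq_iff₀ hd |>.mpr hx.symm]

variable (F) in
noncomputable def arcEquiv :
    SimpleGraph.Arc (Option F) ≃ {A : Matrix (Fin 2) (Fin 2) F // A * A = A ∧ A ≠ 0 ∧ A ≠ 1} :=
  Equiv.ofBijective
    (fun p => ⟨proj p.1.1 p.1.2, proj_mul_self p.2, proj_ne_zero p.2, proj_ne_one p.2⟩)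
    ⟨fun p q h => Subtype.ext (Prod.ext_iff.mpr (eq_of_proj_eq p.2 q.2 congr(($h).1))),
     fun A => by
      obtain ⟨x, y, hxy, hA⟩ := exists_proj_eq A.2.1 A.2.2.1 A.2.2.2
      exact ⟨⟨(x, y), hxy⟩, Subtype.ext hA⟩⟩

noncomputable def arcGraphIso
    {G : SimpleGraph {A : Matrix (Fin 2) (Fin 2) F // A * A = A ∧ A ≠ 0 ∧ A ≠ 1}}
    (hG : ∀ e f, G.Adj e f ↔ e ≠ f ∧ ((e : Matrix (Fin 2) (Fin 2) F) * f = 0 ∨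
      (f : Matrix (Fin 2) (Fin 2) F) * e = 0)) :
    SimpleGraph.arcGraph (Option F) ≃g G where
  toEquiv := arcEquiv F
  map_rel_iff' {p q} := by
    rw [hG, (arcEquiv F).injective.ne_iff, SimpleGraph.arcGraph_adj]
    exact and_congr_right fun _ =>
      or_congr (proj_mul_proj_eq_zero_iff p.2 q.2) (proj_mul_proj_eq_zero_iff q.2 p.2)

end ProjectiveLine

open SimpleGraph ProjectiveLine in
theorem stmt_19 (F : Type*) [Field F] [Fintype F] [DecidableEq F] (n : ℕ) (hn : Fintype.card F = n)
    (G : SimpleGraph {A : Matrix (Fin 2) (Fin 2) F // A * A = A ∧ A ≠ 0 ∧ A ≠ 1})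
    (hG : ∀ e f, G.Adj e f ↔ e ≠ f ∧ ((e : Matrix (Fin 2) (Fin 2) F) * f = 0 ∨
      (f : Matrix (Fin 2) (Fin 2) F) * e = 0)) :
    (1 / 2 : ℚ) * ∑ u : {A : Matrix (Fin 2) (Fin 2) F // A * A = A ∧ A ≠ 0 ∧ A ≠ 1},
        ∑ v : {A : Matrix (Fin 2) (Fin 2) F // A * A = A ∧ A ≠ 0 ∧ A ≠ 1},
          (if u = v then 0 else (G.dist u v : ℚ)⁻¹) =
      (1 / 4 : ℚ) * ((n : ℚ) ^ 2 + n) * ((n : ℚ) ^ 2 + 3 * n - 2) := by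
  classical
  subst hn
  let φ := arcGraphIso hG
  rw [harary_eq_of_isRegularOfDegree (φ.isRegularOfDegree arcGraph_isRegularOfDegree)
      (φ.forall_commonNeighbors_nonempty arcGraph_commonNeighbors_nonempty),
    ← Fintype.card_congr φ.toEquiv, card_arcs, Fintype.card_option, add_tsub_cancel_right]
  have hF : 1 ≤ Fintype.card F := Fintype.card_pos
  push_cast [Nat.cast_sub (by omega : 1 ≤ 2 * Fintype.card F)]
  ring
end
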